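/- Let N = (P, L) be a near polygon that is a full isometrically embedded subgeometry of a near polygon N', and for every point x of N' let f_x be the valuation of N defined by f_x(y) = d_{N'}(x,y) − d_{N'}(x,P). Then for every pair of distinct collinear points x1 and x2 of N', the valuations f_{x1} and f_{x2} are neighboring. -/

import Mathlib

/-- The collinearity graph of a point-line geometry whose lines are given as
sets of points: two points are adjacent when they are distinct and lie on a
common line. -/
def collGraph {P : Type*} (Lines : Set (Set P)) : SimpleGraph P where
  Adj x y := x ≠ y ∧ ∃ L ∈ Lines, x ∈ L ∧ y ∈ L
  symm := ⟨by
    rintro x y ⟨hxy, L, hL, hx, hy⟩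
    exact ⟨hxy.symm, L, hL, hy, hx⟩⟩
  loopless := ⟨by
    rintro x ⟨h, -⟩
    exact h rfl⟩

/-- A near `2d`-gon: a partial linear space (every line carries at least two
points, two distinct points lie on at most one common line) whose collinearity
graph is connected of diameter `d`, and in which for every point `x` and every
line `L` there is a unique point of `L` nearest to `x`.  A near hexagon is a
`NearPolygon P 3`, a near octagon is a `NearPolygon P 4`. -/
structure NearPolygon (P : Type*) (d : ℕ) where
  Lines : Set (Set P)
  two_pts : ∀ L ∈ Lines, ∃ x ∈ L, ∃ y ∈ L, x ≠ y
  unique_line : ∀ L₁ ∈ Lines, ∀ L₂ ∈ Lines, ∀ x y : P,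
    x ≠ y → x ∈ L₁ → y ∈ L₁ → x ∈ L₂ → y ∈ L₂ → L₁ = L₂
  connected : (collGraph Lines).Connected
  diam_le : ∀ x y : P, (collGraph Lines).dist x y ≤ d
  diam_eq : ∃ x y : P, (collGraph Lines).dist x y = d
  near : ∀ (x : P), ∀ L ∈ Lines, ∃! y, y ∈ L ∧
    ∀ z ∈ L, (collGraph Lines).dist x y ≤ (collGraph Lines).dist x z

/-- A near polygon has order `(s,t)` if every line is incident with exactly
`s+1` points and every point is incident with exactly `t+1` lines. -/
def NearPolygon.hasOrder {P : Type*} {d : ℕ} (N : NearPolygon P d) (s t : ℕ) : Prop :=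
  (∀ L ∈ N.Lines, L.ncard = s + 1) ∧
  (∀ x : P, {L | L ∈ N.Lines ∧ x ∈ L}.ncard = t + 1)

/-- A semi-valuation: every line `L` contains a unique point `xL` such that
every other point of `L` has value `f xL + 1`. -/
def IsSemiValuation {P : Type*} (Lines : Set (Set P)) (f : P → ℤ) : Prop :=
  ∀ L ∈ Lines, ∃! xL, xL ∈ L ∧ ∀ x ∈ L, x ≠ xL → f x = f xL + 1

/-- A valuation: a semi-valuation whose minimum value is `0`. -/
def IsValuation {P : Type*} (Lines : Set (Set P)) (f : P → ℤ) : Prop :=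
  IsSemiValuation Lines f ∧ (∀ x, 0 ≤ f x) ∧ (∃ x, f x = 0)

/-- `ι` realizes the geometry with lines `LQ` as a full isometrically embedded
subgeometry of the geometry with lines `LP` (lines being identified with their
point sets, fullness amounts to lines mapping onto lines). -/
structure IsFullIsomEmb {Q P : Type*} (LQ : Set (Set Q)) (LP : Set (Set P))
    (ι : Q → P) : Prop where
  inj : Function.Injective ι
  line_map : ∀ L ∈ LQ, ι '' L ∈ LP
  isometric : ∀ x y : Q, (collGraph LP).dist (ι x) (ι y) = (collGraph LQ).dist x y

/-- The distance `d(x, P)` from a point `x` of the ambient geometry to the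
point set of the embedded subgeometry. -/
noncomputable def distToSub {Q P : Type*} (LP : Set (Set P)) (ι : Q → P) (x : P) : ℕ :=
  sInf (Set.range fun z : Q => (collGraph LP).dist x (ι z))

/-- The function `f_x : y ↦ d(x, y) - d(x, P)` induced on the embedded
subgeometry by a point `x` of the ambient geometry. -/
noncomputable def inducedVal {Q P : Type*} (LP : Set (Set P)) (ι : Q → P) (x : P) :
    Q → ℤ :=
  fun y => ((collGraph LP).dist x (ι y) : ℤ) - (distToSub LP ι x : ℤ)

/-- Two valuations are neighboring if `|f1 x - f2 x + ε| ≤ 1` for all `x`,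
for some integer `ε`. -/
def Neighboring {P : Type*} (f1 f2 : P → ℤ) : Prop :=
  ∃ ε : ℤ, ∀ x, |f1 x - f2 x + ε| ≤ 1

/-- The semi-valuation `f3'` built from two neighboring valuations `f1, f2`
and a compatible `ε`. -/
def starFun {P : Type*} (f1 f2 : P → ℤ) (ε : ℤ) (x : P) : ℤ :=
  if f1 x = f2 x - ε then f1 x - 1 else max (f1 x) (f2 x - ε)

/-- `StarRel f1 f2 f3` expresses `f1 * f2 = f3`: some `ε ∈ {-1,0,1}` witnesses
that `f1` and `f2` are neighboring, and, for every such `ε`, subtracting the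
minimum value `m` of `f3' = starFun f1 f2 ε` from `f3'` yields `f3`. -/
def StarRel {P : Type*} (f1 f2 f3 : P → ℤ) : Prop :=
  (∃ ε ∈ ({-1, 0, 1} : Set ℤ), ∀ x, |f1 x - f2 x + ε| ≤ 1) ∧
  ∀ ε ∈ ({-1, 0, 1} : Set ℤ), (∀ x, |f1 x - f2 x + ε| ≤ 1) →
    ∃ m : ℤ, IsLeast (Set.range (starFun f1 f2 ε)) m ∧
      ∀ x, f3 x = starFun f1 f2 ε x - m

/-- A subspace: together with two distinct collinear points it contains every
line through them. -/
def IsSubspace {P : Type*} (Lines : Set (Set P)) (X : Set P) : Prop :=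
  ∀ L ∈ Lines, ∀ x ∈ L, ∀ y ∈ L, x ≠ y → x ∈ X → y ∈ X → L ⊆ X

/-- A convex subspace: a subspace containing every point on a shortest path
between any two of its points. -/
def IsConvexSubspace {P : Type*} (Lines : Set (Set P)) (X : Set P) : Prop :=
  IsSubspace Lines X ∧
  ∀ x ∈ X, ∀ y ∈ X, ∀ z : P,
    (collGraph Lines).dist x z + (collGraph Lines).dist z y
      = (collGraph Lines).dist x y → z ∈ X

/-- A quad: a convex subspace of diameter `2` inducing (with the lines fully
contained in it) a nondegenerate generalized quadrangle. -/
def IsQuad {P : Type*} (Lines : Set (Set P)) (Q : Set P) : Prop :=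
  IsConvexSubspace Lines Q ∧
  (∀ x ∈ Q, ∀ y ∈ Q, (collGraph Lines).dist x y ≤ 2) ∧
  (∃ x ∈ Q, ∃ y ∈ Q, (collGraph Lines).dist x y = 2) ∧
  (∀ x ∈ Q, ∀ L ∈ Lines, L ⊆ Q → x ∉ L →
    ∃! y, y ∈ L ∧ (collGraph Lines).Adj x y) ∧
  (∀ x ∈ Q, ∃ L₁ ∈ Lines, ∃ L₂ ∈ Lines,
    L₁ ⊆ Q ∧ L₂ ⊆ Q ∧ x ∈ L₁ ∧ x ∈ L₂ ∧ L₁ ≠ L₂) ∧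
  (∃ x ∈ Q, ∃ y ∈ Q, x ≠ y ∧ ¬ (collGraph Lines).Adj x y)

/-- A quad has order `(s,t')` if each of its lines has `s+1` points and each
of its points is on exactly `t'+1` lines contained in the quad. -/
def QuadHasOrder {P : Type*} (Lines : Set (Set P)) (Q : Set P) (s t' : ℕ) : Prop :=
  (∀ L ∈ Lines, L ⊆ Q → L.ncard = s + 1) ∧
  (∀ x ∈ Q, {L | L ∈ Lines ∧ L ⊆ Q ∧ x ∈ L}.ncard = t' + 1)

theorem SimpleGraph.Adj.abs_dist_sub_dist_le_one {V : Type*} {G : SimpleGraph V} {v w : V}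
    (hadj : G.Adj v w) (u : V) : |(G.dist v u : ℤ) - G.dist w u| ≤ 1 := by
  rw [G.dist_comm (u := v), G.dist_comm (u := w), abs_le]
  rcases hadj.diff_dist_adj (u := u) with h | h | h <;> omega

theorem inducedVal_neighboring_general {Q P : Type*} {dP : ℕ}
    (N' : NearPolygon P dP) (ι : Q → P)
    (x1 x2 : P) (h : (collGraph N'.Lines).Adj x1 x2) :
    Neighboring (inducedVal N'.Lines ι x1) (inducedVal N'.Lines ι x2) := by
  refine ⟨distToSub N'.Lines ι x1 - distToSub N'.Lines ι x2, fun y => ?_⟩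
  have hshift : inducedVal N'.Lines ι x1 y - inducedVal N'.Lines ι x2 y
        + (distToSub N'.Lines ι x1 - distToSub N'.Lines ι x2)
      = ((collGraph N'.Lines).dist x1 (ι y) : ℤ) - (collGraph N'.Lines).dist x2 (ι y) := by
    simp only [inducedVal]
    ring
  rw [hshift]
  exact h.abs_dist_sub_dist_le_one (ι y)

/-- If a near polygon `N` is a full isometrically embedded
subgeometry of a near polygon `N'`, then for every pair of distinct collinear
points `x1, x2` of `N'` the induced valuations `f_{x1}` and `f_{x2}` of `N`
are neighboring. -/
theorem inducedVal_neighboring {Q P : Type*} {dQ dP : ℕ}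
    (N : NearPolygon Q dQ) (N' : NearPolygon P dP) (ι : Q → P)
    (emb : IsFullIsomEmb N.Lines N'.Lines ι)
    (x1 x2 : P) (h : (collGraph N'.Lines).Adj x1 x2) :
    Neighboring (inducedVal N'.Lines ι x1) (inducedVal N'.Lines ι x2) :=
  inducedVal_neighboring_general N' ι x1 x2 h
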